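/- Let k be an algebraically closed field of characteristic zero and τ ≥ 1 an integer. Let ψ : k[X, Y₁, Y₂, Y₃, Y₄] → k[t] be the k-algebra homomorphism with ψ(X) = t^6 and ψ(Y_j) = t^{j+6τ} for j = 1, 2, 3, 4. Then the kernel of ψ is the ideal generated by the nine binomials: Y₁² − X^τ Y₂, Y₁Y₂ − X^τ Y₃, Y₁Y₃ − X^τ Y₄, Y₂² − X^τ Y₄, Y₁Y₄ − Y₂Y₃, Y₂Y₄ − X^{2τ+1}, Y₃² − X^{2τ+1}, Y₃Y₄ − X^{τ+1} Y₁, Y₄² − X^{τ+1} Y₂. -/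
import Mathlib


/-- The `k`-algebra homomorphism `k[X, Y₁, Y₂, Y₃, Y₄] → k[t]` with `X ↦ t^6` and
`Y_j ↦ t^{j+6τ}` for `j = 1, 2, 3, 4` (variables indexed `0,…,4` in this order). -/
noncomputable def monCurveMapTwo (k : Type*) [CommRing k] (τ : ℕ) :
    MvPolynomial (Fin 5) k →ₐ[k] Polynomial k :=
  MvPolynomial.aeval fun i : Fin 5 =>
    (Polynomial.X : Polynomial k) ^ (![6, 1 + 6 * τ, 2 + 6 * τ, 3 + 6 * τ, 4 + 6 * τ] i)

/-- The nine binomials `Y₁² − X^τY₂, Y₁Y₂ − X^τY₃, Y₁Y₃ − X^τY₄, Y₂² − X^τY₄,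
Y₁Y₄ − Y₂Y₃, Y₂Y₄ − X^{2τ+1}, Y₃² − X^{2τ+1}, Y₃Y₄ − X^{τ+1}Y₁, Y₄² − X^{τ+1}Y₂`. -/
noncomputable def monCurveGensTwo (k : Type*) [CommRing k] (τ : ℕ) :
    Set (MvPolynomial (Fin 5) k) :=
  let X : MvPolynomial (Fin 5) k := MvPolynomial.X 0
  let Y1 : MvPolynomial (Fin 5) k := MvPolynomial.X 1
  let Y2 : MvPolynomial (Fin 5) k := MvPolynomial.X 2
  let Y3 : MvPolynomial (Fin 5) k := MvPolynomial.X 3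
  let Y4 : MvPolynomial (Fin 5) k := MvPolynomial.X 4
  {Y1 ^ 2 - X ^ τ * Y2, Y1 * Y2 - X ^ τ * Y3, Y1 * Y3 - X ^ τ * Y4,
   Y2 ^ 2 - X ^ τ * Y4, Y1 * Y4 - Y2 * Y3, Y2 * Y4 - X ^ (2 * τ + 1),
   Y3 ^ 2 - X ^ (2 * τ + 1), Y3 * Y4 - X ^ (τ + 1) * Y1, Y4 ^ 2 - X ^ (τ + 1) * Y2}

namespace MonCurveTwoAux

variable (k : Type*) [Field k] (τ : ℕ)

lemma span_le_ker :
    Ideal.span (monCurveGensTwo k τ) ≤ RingHom.ker (monCurveMapTwo k τ).toRingHom := by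
  rw [Ideal.span_le]
  intro g hg
  simp only [monCurveGensTwo, Set.mem_insert_iff, Set.mem_singleton_iff] at hg
  rcases hg with rfl|rfl|rfl|rfl|rfl|rfl|rfl|rfl|rfl <;>
    · simp only [SetLike.mem_coe, RingHom.mem_ker, AlgHom.toRingHom_eq_coe, RingHom.coe_coe,
        map_sub, map_mul, map_pow, monCurveMapTwo, MvPolynomial.aeval_X]
      simp only [← pow_mul, ← pow_add]
      rw [sub_eq_zero]
      congr 1
      simp only [Matrix.cons_val_zero, Matrix.cons_val_one, Matrix.head_cons,
        Matrix.cons_val_two, Matrix.tail_cons, Matrix.cons_val_three, Matrix.cons_val_four,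
        Matrix.cons_val_succ]
      ring

/-- Normal-form "tail" monomials: `1, Y₁, Y₂, Y₃, Y₄, Y₁Y₄`. -/
noncomputable def B : Fin 6 → MvPolynomial (Fin 5) k := fun s =>
  match s.val with
  | 1 => MvPolynomial.X 1
  | 2 => MvPolynomial.X 2
  | 3 => MvPolynomial.X 3
  | 4 => MvPolynomial.X 4
  | 5 => MvPolynomial.X 1 * MvPolynomial.X 4
  | _ => 1

/-- Exponent weights of the tails. -/
def W : Fin 6 → ℕ := fun s =>
  match s.val with
  | 1 => 1 + 6 * τ
  | 2 => 2 + 6 * τ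
  | 3 => 3 + 6 * τ
  | 4 => 4 + 6 * τ
  | 5 => 5 + 12 * τ
  | _ => 0

/-- Normal-form monomials `X^a · B_s`. -/
noncomputable def v (p : ℕ × Fin 6) : MvPolynomial (Fin 5) k :=
  (MvPolynomial.X 0) ^ p.1 * B k p.2

/-- Exponent of the image of `v`. -/
def E (p : ℕ × Fin 6) : ℕ := 6 * p.1 + W τ p.2

lemma map_B (s : Fin 6) : monCurveMapTwo k τ (B k s) = Polynomial.X ^ W τ s := by
  fin_cases s <;>
    simp [monCurveMapTwo, B, W, ← pow_add] <;>
    · congr 1; ring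

lemma map_v (p : ℕ × Fin 6) :
    monCurveMapTwo k τ (v k p) = Polynomial.X ^ E τ p := by
  have h0 : monCurveMapTwo k τ (MvPolynomial.X 0) = Polynomial.X ^ 6 := by
    simp [monCurveMapTwo]
  rw [v, map_mul, map_pow, map_B, h0, ← pow_mul, ← pow_add, E]

lemma E_inj : Function.Injective (E τ) := by
  rintro ⟨a, s⟩ ⟨a', s'⟩ h
  simp only [E] at h
  have hs : s = s' := by
    fin_cases s <;> fin_cases s' <;>
      first
        | rfl
        | (exfalso; simp only [W] at h; omega)
  subst hs
  have ha : a = a' := by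
    have h6 : 6 * a = 6 * a' := Nat.add_right_cancel h
    omega
  subst ha
  rfl

lemma linInd :
    LinearIndependent k (fun p : ℕ × Fin 6 => (Polynomial.X : Polynomial k) ^ E τ p) := by
  have hb := (Polynomial.basisMonomials k).linearIndependent
  have h2 := hb.comp (E τ) (E_inj τ)
  have : (fun p : ℕ × Fin 6 => (Polynomial.X : Polynomial k) ^ E τ p)
      = (Polynomial.basisMonomials k) ∘ (E τ) := by
    funext p
    simp [Polynomial.X_pow_eq_monomial, Function.comp]
  rw [this]
  exact h2


section Red

variable {k : Type*} [Field k] {τ : ℕ}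

local notation "X0" => (MvPolynomial.X 0 : MvPolynomial (Fin 5) k)
local notation "Y1" => (MvPolynomial.X 1 : MvPolynomial (Fin 5) k)
local notation "Y2" => (MvPolynomial.X 2 : MvPolynomial (Fin 5) k)
local notation "Y3" => (MvPolynomial.X 3 : MvPolynomial (Fin 5) k)
local notation "Y4" => (MvPolynomial.X 4 : MvPolynomial (Fin 5) k)
local notation "I" => Ideal.span (monCurveGensTwo k τ)

lemma mem_of_eq {a b : MvPolynomial (Fin 5) k} (h : a = b) (hb : b ∈ I) : a ∈ I := h ▸ hb

lemma red (s : Fin 6) (i : Fin 5) :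
    ∃ (a : ℕ) (s' : Fin 6),
      B k s * MvPolynomial.X i - (MvPolynomial.X 0) ^ a * B k s' ∈ I := by
  have h1 : Y1 ^ 2 - X0 ^ τ * Y2 ∈ I := Ideal.subset_span (by simp [monCurveGensTwo])
  have h2 : Y1 * Y2 - X0 ^ τ * Y3 ∈ I := Ideal.subset_span (by simp [monCurveGensTwo])
  have h3 : Y1 * Y3 - X0 ^ τ * Y4 ∈ I := Ideal.subset_span (by simp [monCurveGensTwo])
  have h4 : Y2 ^ 2 - X0 ^ τ * Y4 ∈ I := Ideal.subset_span (by simp [monCurveGensTwo])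
  have h5 : Y1 * Y4 - Y2 * Y3 ∈ I := Ideal.subset_span (by simp [monCurveGensTwo])
  have h6 : Y2 * Y4 - X0 ^ (2 * τ + 1) ∈ I := Ideal.subset_span (by simp [monCurveGensTwo])
  have h7 : Y3 ^ 2 - X0 ^ (2 * τ + 1) ∈ I := Ideal.subset_span (by simp [monCurveGensTwo])
  have h8 : Y3 * Y4 - X0 ^ (τ + 1) * Y1 ∈ I := Ideal.subset_span (by simp [monCurveGensTwo])
  have h9 : Y4 ^ 2 - X0 ^ (τ + 1) * Y2 ∈ I := Ideal.subset_span (by simp [monCurveGensTwo])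
  fin_cases s <;> fin_cases i <;> simp only [B]
  -- s = 0
  · exact ⟨1, 0, mem_of_eq (by simp [B]; try ring) (zero_mem I)⟩
  · exact ⟨0, 1, mem_of_eq (by simp [B]; try ring) (zero_mem I)⟩
  · exact ⟨0, 2, mem_of_eq (by simp [B]; try ring) (zero_mem I)⟩
  · exact ⟨0, 3, mem_of_eq (by simp [B]; try ring) (zero_mem I)⟩
  · exact ⟨0, 4, mem_of_eq (by simp [B]; try ring) (zero_mem I)⟩
  -- s = 1
  · exact ⟨1, 1, mem_of_eq (by simp [B]; try ring) (zero_mem I)⟩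
  · exact ⟨τ, 2, mem_of_eq (by simp [B]; try ring) h1⟩
  · exact ⟨τ, 3, mem_of_eq (by simp [B]; try ring) h2⟩
  · exact ⟨τ, 4, mem_of_eq (by simp [B]; try ring) h3⟩
  · exact ⟨0, 5, mem_of_eq (by simp [B]; try ring) (zero_mem I)⟩
  -- s = 2
  · exact ⟨1, 2, mem_of_eq (by simp [B]; try ring) (zero_mem I)⟩
  · exact ⟨τ, 3, mem_of_eq (by simp [B]; try ring) h2⟩
  · exact ⟨τ, 4, mem_of_eq (by simp [B]; try ring) h4⟩
  · exact ⟨0, 5, mem_of_eq (show _ = -(Y1 * Y4 - Y2 * Y3) by simp [B]; try ring) (neg_mem h5)⟩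
  · exact ⟨2 * τ + 1, 0, mem_of_eq (by simp [B]; try ring) h6⟩
  -- s = 3
  · exact ⟨1, 3, mem_of_eq (by simp [B]; try ring) (zero_mem I)⟩
  · exact ⟨τ, 4, mem_of_eq (by simp [B]; try ring) h3⟩
  · exact ⟨0, 5, mem_of_eq (show _ = -(Y1 * Y4 - Y2 * Y3) by simp [B]; try ring) (neg_mem h5)⟩
  · exact ⟨2 * τ + 1, 0, mem_of_eq (by simp [B]; try ring) h7⟩
  · exact ⟨τ + 1, 1, mem_of_eq (by simp [B]; try ring) h8⟩
  -- s = 4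
  · exact ⟨1, 4, mem_of_eq (by simp [B]; try ring) (zero_mem I)⟩
  · exact ⟨0, 5, mem_of_eq (by simp [B]; try ring) (zero_mem I)⟩
  · exact ⟨2 * τ + 1, 0, mem_of_eq (by simp [B]; try ring) h6⟩
  · exact ⟨τ + 1, 1, mem_of_eq (by simp [B]; try ring) h8⟩
  · exact ⟨τ + 1, 2, mem_of_eq (by simp [B]; try ring) h9⟩
  -- s = 5
  · exact ⟨1, 5, mem_of_eq (by simp [B]; try ring) (zero_mem I)⟩
  · exact ⟨3 * τ + 1, 0,
      mem_of_eq (show _ = Y4 * (Y1 ^ 2 - X0 ^ τ * Y2) + X0 ^ τ * (Y2 * Y4 - X0 ^ (2 * τ + 1))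
          by simp [B]; try ring)
        (add_mem (Ideal.mul_mem_left I _ h1) (Ideal.mul_mem_left I _ h6))⟩
  · exact ⟨2 * τ + 1, 1,
      mem_of_eq (show _ = Y1 * (Y2 * Y4 - X0 ^ (2 * τ + 1)) by simp [B]; try ring)
        (Ideal.mul_mem_left I _ h6)⟩
  · exact ⟨2 * τ + 1, 2,
      mem_of_eq (show _ = Y4 * (Y1 * Y3 - X0 ^ τ * Y4) + X0 ^ τ * (Y4 ^ 2 - X0 ^ (τ + 1) * Y2)
          by simp [B]; try ring)
        (add_mem (Ideal.mul_mem_left I _ h3) (Ideal.mul_mem_left I _ h9))⟩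
  · exact ⟨2 * τ + 1, 3,
      mem_of_eq (show _ = Y1 * (Y4 ^ 2 - X0 ^ (τ + 1) * Y2) + X0 ^ (τ + 1) * (Y1 * Y2 - X0 ^ τ * Y3)
          by simp [B]; try ring)
        (add_mem (Ideal.mul_mem_left I _ h9) (Ideal.mul_mem_left I _ h2))⟩

end Red

section Main

variable {k : Type*} [Field k] {τ : ℕ}

lemma total_mem (f : MvPolynomial (Fin 5) k) :
    f ∈ Submodule.span k (Set.range (v k)) ⊔
      (Ideal.span (monCurveGensTwo k τ)).restrictScalars k := by
  set T : Submodule k (MvPolynomial (Fin 5) k) :=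
    Submodule.span k (Set.range (v k)) ⊔
      (Ideal.span (monCurveGensTwo k τ)).restrictScalars k with hT
  induction f using MvPolynomial.induction_on with
  | C c =>
      have h1 : (1 : MvPolynomial (Fin 5) k) ∈ Submodule.span k (Set.range (v k)) :=
        Submodule.subset_span ⟨(0, 0), by simp [v, B]⟩
      have h2 := Submodule.smul_mem _ c h1
      have h3 : MvPolynomial.C c = c • (1 : MvPolynomial (Fin 5) k) := by
        rw [MvPolynomial.smul_eq_C_mul, mul_one]
      rw [h3]
      exact Submodule.mem_sup_left h2
  | add p q hp hq => exact add_mem hp hq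
  | mul_X p n hp =>
      rw [hT, Submodule.mem_sup] at hp
      obtain ⟨a, ha, b, hb, rfl⟩ := hp
      rw [Submodule.restrictScalars_mem] at hb
      rw [add_mul]
      refine add_mem ?_ ?_
      · -- a * X n ∈ T
        induction ha using Submodule.span_induction with
        | mem x hx =>
            obtain ⟨⟨m, s⟩, rfl⟩ := hx
            obtain ⟨a', s', hred⟩ := red (k := k) (τ := τ) s n
            have hEq : v k (m, s) * MvPolynomial.X n
                = MvPolynomial.X 0 ^ m *
                    (B k s * MvPolynomial.X n - MvPolynomial.X 0 ^ a' * B k s')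
                  + v k (m + a', s') := by
              simp only [v, pow_add]; ring
            rw [hEq]
            refine add_mem (Submodule.mem_sup_right ?_)
              (Submodule.mem_sup_left (Submodule.subset_span ⟨_, rfl⟩))
            rw [Submodule.restrictScalars_mem]
            exact Ideal.mul_mem_left _ _ hred
        | zero => simpa using zero_mem T
        | add x y _ _ hx hy => rw [add_mul]; exact add_mem hx hy
        | smul c x _ hx => rw [smul_mul_assoc]; exact Submodule.smul_mem _ _ hx
      · refine Submodule.mem_sup_right ?_
        rw [Submodule.restrictScalars_mem]
        exact Ideal.mul_mem_right _ _ hb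

end Main

end MonCurveTwoAux

/-- For an algebraically closed field `k` of characteristic zero and `τ ≥ 1`,
the kernel of `ψ : k[X,Y₁,Y₂,Y₃,Y₄] → k[t]`, `X ↦ t^6`, `Y_j ↦ t^{j+6τ}`, is the ideal
generated by the nine binomials listed above. -/
theorem ker_monomial_curve_family_two
    (k : Type*) [Field k] [IsAlgClosed k] [CharZero k] (τ : ℕ) (hτ : 1 ≤ τ) :
    RingHom.ker (monCurveMapTwo k τ).toRingHom = Ideal.span (monCurveGensTwo k τ) := by
  refine le_antisymm ?_ (MonCurveTwoAux.span_le_ker k τ)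
  intro f hf
  have hT := MonCurveTwoAux.total_mem (τ := τ) f
  rw [Submodule.mem_sup] at hT
  obtain ⟨a, ha, b, hb, hab⟩ := hT
  rw [Submodule.restrictScalars_mem] at hb
  suffices h : a = 0 by
    rw [← hab, h, zero_add]; exact hb
  have hfker : monCurveMapTwo k τ f = 0 := hf
  have hbker : monCurveMapTwo k τ b = 0 := MonCurveTwoAux.span_le_ker k τ hb
  have hψa : monCurveMapTwo k τ a = 0 := by
    have := congrArg (monCurveMapTwo k τ) hab
    rw [map_add, hbker, add_zero, hfker] at this
    exact this
  rw [Finsupp.mem_span_range_iff_exists_finsupp] at ha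
  obtain ⟨c, hc⟩ := ha
  have htot : Finsupp.linearCombination k
      (fun p : ℕ × Fin 6 => (Polynomial.X : Polynomial k) ^ MonCurveTwoAux.E τ p) c = 0 := by
    rw [Finsupp.linearCombination_apply, ← hψa, ← hc, map_finsuppSum]
    refine Finsupp.sum_congr fun p _ => ?_
    rw [map_smul, MonCurveTwoAux.map_v]
  have hc0 : c = 0 := linearIndependent_iff.mp (MonCurveTwoAux.linInd k τ) c htot
  rw [← hc, hc0]
  simp
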